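/- arXiv:1902.00468 — 2 statements merged into one kernel-verified Lean document; each statement's English description precedes it below -/
import Mathlib

section
/- Let T be a natural number, V, C : {0,1,...,T} → ℝ strictly positive, and M > 0. Define N*_t = (M / ∑_{j=0}^{T} √(V_j C_j)) · √(V_t / C_t) for each t. Then N*_t > 0 for all t, the cost constraint ∑_{t=0}^{T} N*_t C_t = M holds, and the total variance attains the optimal value ∑_{t=0}^{T} V_t / N*_t = (∑_{t=0}^{T} √(V_t C_t))² / M; consequently N* minimizes ∑_t V_t/N_t over all positive N with ∑_t N_t C_t = M. -/
open Finset

/-- Attainment half of Theorem 1 (Optimal Sample Size): the sample sizes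
`N* t = (M / ∑ j, √(V j * C j)) * √(V t / C t)` are positive, satisfy the cost
constraint, attain total variance `(∑ t, √(V t * C t))² / M`, and minimize the
total variance among all positive sample sizes with total cost `M`. -/
theorem mlmc_optimal_sample_size_attainment
    (T : ℕ) (V C : Fin (T + 1) → ℝ)
    (hV : ∀ t, 0 < V t) (hC : ∀ t, 0 < C t)
    (M : ℝ) (hM : 0 < M)
    (Nstar : Fin (T + 1) → ℝ)
    (hNstar : ∀ t, Nstar t =
      (M / ∑ j, Real.sqrt (V j * C j)) * Real.sqrt (V t / C t)) :
    (∀ t, 0 < Nstar t) ∧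
    (∑ t, Nstar t * C t = M) ∧
    (∑ t, V t / Nstar t = (∑ t, Real.sqrt (V t * C t)) ^ 2 / M) ∧
    (∀ N : Fin (T + 1) → ℝ, (∀ t, 0 < N t) → (∑ t, N t * C t = M) →
      ∑ t, V t / Nstar t ≤ ∑ t, V t / N t) := by
  set S : ℝ := ∑ j, Real.sqrt (V j * C j) with hS
  have hSpos : 0 < S := by
    apply Finset.sum_pos
    · intro i _
      exact Real.sqrt_pos.2 (mul_pos (hV i) (hC i))
    · exact Finset.univ_nonempty
  have hsqrtVC : ∀ t, 0 < Real.sqrt (V t) ∧ 0 < Real.sqrt (C t) := fun t =>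
    ⟨Real.sqrt_pos.2 (hV t), Real.sqrt_pos.2 (hC t)⟩
  have hNpos : ∀ t, 0 < Nstar t := by
    intro t
    rw [hNstar t]
    exact mul_pos (div_pos hM hSpos) (Real.sqrt_pos.2 (div_pos (hV t) (hC t)))
  have hcost : ∑ t, Nstar t * C t = M := by
    have h1 : ∀ t, Nstar t * C t = (M / S) * Real.sqrt (V t * C t) := by
      intro t
      obtain ⟨hv, hc⟩ := hsqrtVC t
      rw [hNstar t, Real.sqrt_div (hV t).le, Real.sqrt_mul (hV t).le,
        ← Real.mul_self_sqrt (hC t).le]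
      field_simp
      ring
      rw [Real.sqrt_sq hc.le]
    rw [Finset.sum_congr rfl (fun t _ => h1 t), ← Finset.mul_sum, ← hS,
      div_mul_cancel₀ _ hSpos.ne']
  have hvar : ∑ t, V t / Nstar t = S ^ 2 / M := by
    have h1 : ∀ t, V t / Nstar t = (S / M) * Real.sqrt (V t * C t) := by
      intro t
      obtain ⟨hv, hc⟩ := hsqrtVC t
      rw [hNstar t, Real.sqrt_div (hV t).le, Real.sqrt_mul (hV t).le,
        ← Real.mul_self_sqrt (hV t).le]
      field_simp
      ring
      rw [Real.sqrt_sq hv.le]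
    rw [Finset.sum_congr rfl (fun t _ => h1 t), ← Finset.mul_sum, ← hS]
    rw [div_mul_eq_mul_div, sq]
  refine ⟨hNpos, hcost, hvar, ?_⟩
  intro N hNp hNc
  have hCS : S ^ 2 ≤ (∑ t, V t / N t) * ∑ t, N t * C t := by
    apply Finset.sum_sq_le_sum_mul_sum_of_sq_eq_mul
    · intro i _; exact (div_pos (hV i) (hNp i)).le
    · intro i _; exact (mul_pos (hNp i) (hC i)).le
    · intro i _
      have hni := (hNp i).ne'
      rw [Real.sq_sqrt (mul_pos (hV i) (hC i)).le]
      field_simp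
  rw [hNc] at hCS
  rw [hvar, div_le_iff₀ hM]
  exact hCS
end

section
/- Let V be a real vector space, let α_0 > 0, and let (η_t)_{t≥0} be a sequence of nonzero real numbers with step sizes α_t = α_0 η_t. Let (Ĝ_t)_{t≥0} and (D_t)_{t≥1} be sequences in V satisfying the multilevel recursion Ĝ_t = Ĝ_{t-1} + D_t for t ≥ 1, and let (λ_t)_{t≥0} be a sequence in V satisfying the SGD update λ_{t+1} = λ_t − α_t Ĝ_t for all t ≥ 0. Then for every t ≥ 1, λ_{t+1} = λ_t + (η_t / η_{t-1}) (λ_t − λ_{t-1}) − α_t D_t. -/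
/-- Lemma 1 (Another Formulation of the MRG Estimator): if the gradient estimators satisfy
the multilevel recursion `Ĝ t = Ĝ (t-1) + D t` for `t ≥ 1`, and the parameters follow the
SGD update `λ (t+1) = λ t − α t • Ĝ t` with `α t = α₀ * η t` and `η t ≠ 0`, then for `t ≥ 1`
the update can be written in heavy-ball form
`λ (t+1) = λ t + (η t / η (t-1)) • (λ t − λ (t-1)) − α t • D t`. -/
theorem mrg_heavy_ball_update
    (V : Type*) [AddCommGroup V] [Module ℝ V]
    (α₀ : ℝ) (hα₀ : 0 < α₀)
    (η : ℕ → ℝ) (hη : ∀ t, η t ≠ 0)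
    (α : ℕ → ℝ) (hα : ∀ t, α t = α₀ * η t)
    (G D lam : ℕ → V)
    (hrec : ∀ t, 1 ≤ t → G t = G (t - 1) + D t)
    (hupdate : ∀ t, lam (t + 1) = lam t - α t • G t) :
    ∀ t, 1 ≤ t →
      lam (t + 1) = lam t + (η t / η (t - 1)) • (lam t - lam (t - 1)) - α t • D t := by
  intro t ht
  obtain ⟨s, rfl⟩ : ∃ s, t = s + 1 := ⟨t - 1, by omega⟩
  simp only [Nat.add_sub_cancel]
  have hdiff : lam (s + 1) - lam s = -(α s • G s) := by
    rw [hupdate s]; abel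
  have hcoef : (η (s + 1) / η s) * α s = α (s + 1) := by
    rw [hα s, hα (s + 1)]
    field_simp [hη s]
  calc lam (s + 1 + 1) = lam (s + 1) - α (s + 1) • G (s + 1) := hupdate (s + 1)
    _ = lam (s + 1) - α (s + 1) • (G s + D (s + 1)) := by rw [hrec (s + 1) (by omega)]; norm_num
    _ = lam (s + 1) + (η (s + 1) / η s) • (lam (s + 1) - lam s) - α (s + 1) • D (s + 1) := by
        rw [hdiff, smul_neg, smul_smul, hcoef, smul_add]; abel
end
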